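/- If a top-level context Ω splits three-ways consistently — Ω ⇝ Ω₁ ⋈ Ω₂, Ω₁ ⇝ Ω₁' ⋈ Ω₁'', and Ω₂ ⇝ Ω₂' ⋈ Ω₂'' — then the four leaves can be regrouped: there exist Ω' and Ω'' such that Ω ⇝ Ω' ⋈ Ω'', Ω' ⇝ Ω₁' ⋈ Ω₂', and Ω'' ⇝ Ω₁'' ⋈ Ω₂''. -/
import Mathlib


/-- Availability annotations -/
inductive Avail : Type
  | avail : Avail
  | unavail : Avail
deriving DecidableEq

/-- Vertex structure (VS) types: single vertex, annotated products,
    type variables, corecursive types. -/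
inductive VSTy : Type
  | vert : VSTy
  | prod : VSTy → Avail → VSTy → Avail → VSTy
  | tvar : ℕ → VSTy
  | corec : ℕ → VSTy → VSTy
deriving DecidableEq

/-- Substitution of a VS type for a type variable (capture-avoiding
    in the sense of not descending under a binder that rebinds `t`). -/
def VSTy.subst (t : ℕ) (σ : VSTy) : VSTy → VSTy
  | .vert => .vert
  | .prod τ₁ a₁ τ₂ a₂ => .prod (VSTy.subst t σ τ₁) a₁ (VSTy.subst t σ τ₂) a₂
  | .tvar s => if s = t then σ else .tvar s
  | .corec s τ => if s = t then .corec s τ else .corec s (VSTy.subst t σ τ)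

/-- VS subtyping. -/
inductive SubTy : VSTy → VSTy → Prop
  | refl (τ : VSTy) : SubTy τ τ
  | trans {τ τ'' τ' : VSTy} : SubTy τ τ'' → SubTy τ'' τ' → SubTy τ τ'
  | prodLeft (τ₁ : VSTy) (a₁ : Avail) (τ₂ : VSTy) (a₂ : Avail) (τ₃ : VSTy) :
      SubTy (.prod τ₁ a₁ τ₂ a₂) (.prod τ₃ .unavail τ₂ a₂)
  | prodRight (τ₁ : VSTy) (a₁ : Avail) (τ₂ : VSTy) (a₂ : Avail) (τ₃ : VSTy) :
      SubTy (.prod τ₁ a₁ τ₂ a₂) (.prod τ₁ a₁ τ₃ .unavail)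
  | prodCong {τ₁ τ₁' τ₂ τ₂' : VSTy} (a₁ a₂ : Avail) :
      SubTy τ₁ τ₁' → SubTy τ₂ τ₂' → SubTy (.prod τ₁ a₁ τ₂ a₂) (.prod τ₁' a₁ τ₂' a₂)
  | corec1 (t : ℕ) (τ : VSTy) : SubTy (.corec t τ) (VSTy.subst t (.corec t τ) τ)
  | corec2 (t : ℕ) (τ : VSTy) : SubTy (VSTy.subst t (.corec t τ) τ) (.corec t τ)

/-- VS type splitting  τ ⇝ τ₁ ⋈ τ₂. -/
inductive VSplit : VSTy → VSTy → VSTy → Prop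
  | prod (τ₁ τ₂ : VSTy) :
      VSplit (.prod τ₁ .avail τ₂ .avail)
            (.prod τ₁ .avail τ₂ .unavail)
            (.prod τ₁ .unavail τ₂ .avail)
  | both {τ₁ τ₁' τ₁'' τ₂ τ₂' τ₂'' : VSTy} :
      VSplit τ₁ τ₁' τ₁'' → VSplit τ₂ τ₂' τ₂'' →
      VSplit (.prod τ₁ .avail τ₂ .avail)
            (.prod τ₁' .avail τ₂' .avail)
            (.prod τ₁'' .avail τ₂'' .avail)
  | left {τ₁ τ₁' τ₁'' : VSTy} (τ₂ : VSTy) (a : Avail) :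
      VSplit τ₁ τ₁' τ₁'' →
      VSplit (.prod τ₁ .avail τ₂ a)
            (.prod τ₁' .avail τ₂ a)
            (.prod τ₁'' .avail τ₂ .unavail)
  | right {τ₂ τ₂' τ₂'' : VSTy} (τ₁ : VSTy) (a : Avail) :
      VSplit τ₂ τ₂' τ₂'' →
      VSplit (.prod τ₁ a τ₂ .avail)
            (.prod τ₁ a τ₂' .avail)
            (.prod τ₁ .unavail τ₂'' .avail)
  | corec {t : ℕ} {τ τ₁ τ₂ : VSTy} :
      VSplit (VSTy.subst t (.corec t τ) τ) τ₁ τ₂ → VSplit (.corec t τ) τ₁ τ₂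
  | sub {τ τ₁ τ₁' τ₂ : VSTy} :
      VSplit τ τ₁' τ₂ → SubTy τ₁' τ₁ → VSplit τ τ₁ τ₂
  | comm {τ τ₁ τ₂ : VSTy} : VSplit τ τ₂ τ₁ → VSplit τ τ₁ τ₂

/-- Names bound in contexts: VS variables or generators. -/
inductive VName : Type
  | var : ℕ → VName
  | gen : ℕ → VName
deriving DecidableEq

/-- A context binds names to VS types. -/
abbrev Ctx := List (VName × VSTy)

/-- Affine context splitting  Ω ⇝ Ω₁ ⋈ Ω₂. -/
inductive CtxSplit : Ctx → Ctx → Ctx → Prop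
  | empty : CtxSplit [] [] []
  | comm {Ω Ω₁ Ω₂ : Ctx} : CtxSplit Ω Ω₂ Ω₁ → CtxSplit Ω Ω₁ Ω₂
  | bind {Ω Ω₁ Ω₂ : Ctx} (x : VName) (τ : VSTy) :
      CtxSplit Ω Ω₁ Ω₂ → CtxSplit ((x, τ) :: Ω) ((x, τ) :: Ω₁) Ω₂
  | typeSplit {Ω Ω₁ Ω₂ : Ctx} {τ τ₁ τ₂ : VSTy} (x : VName) :
      CtxSplit Ω Ω₁ Ω₂ → VSplit τ τ₁ τ₂ →
      CtxSplit ((x, τ) :: Ω) ((x, τ₁) :: Ω₁) ((x, τ₂) :: Ω₂)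

/-- Vertex structures. -/
inductive VS : Type
  | var : ℕ → VS
  | gen : ℕ → VS
  | pair : VS → VS → VS
  | fst : VS → VS
  | snd : VS → VS
deriving DecidableEq

/-- Typing of vertex structures:  Ω; Ψ ⊢ V : τ, with affine context Ω
    and unrestricted context Ψ. -/
inductive HasTy : Ctx → Ctx → VS → VSTy → Prop
  | omegaVar {Ω Ψ : Ctx} {u : ℕ} {τ : VSTy} :
      (VName.var u, τ) ∈ Ω → HasTy Ω Ψ (.var u) τ
  | psiVar {Ω Ψ : Ctx} {u : ℕ} {τ : VSTy} :
      (VName.var u, τ) ∈ Ψ → HasTy Ω Ψ (.var u) τ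
  | omegaGen {Ω Ψ : Ctx} {g : ℕ} {τ : VSTy} :
      (VName.gen g, τ) ∈ Ω → HasTy Ω Ψ (.gen g) τ
  | psiGen {Ω Ψ : Ctx} {g : ℕ} {τ : VSTy} :
      (VName.gen g, τ) ∈ Ψ → HasTy Ω Ψ (.gen g) τ
  | pair {Ω Ω₁ Ω₂ Ψ : Ctx} {V₁ V₂ : VS} {τ₁ τ₂ : VSTy} :
      CtxSplit Ω Ω₁ Ω₂ → HasTy Ω₁ Ψ V₁ τ₁ → HasTy Ω₂ Ψ V₂ τ₂ →
      HasTy Ω Ψ (.pair V₁ V₂) (.prod τ₁ .avail τ₂ .avail)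
  | onlyLeftPair {Ω Ψ Ψ' : Ctx} {V₁ V₂ : VS} {τ₁ τ₂ : VSTy} :
      HasTy Ω Ψ V₁ τ₁ → HasTy [] Ψ' V₂ τ₂ →
      HasTy Ω Ψ (.pair V₁ V₂) (.prod τ₁ .avail τ₂ .unavail)
  | onlyRightPair {Ω Ψ Ψ' : Ctx} {V₁ V₂ : VS} {τ₁ τ₂ : VSTy} :
      HasTy [] Ψ' V₁ τ₁ → HasTy Ω Ψ V₂ τ₂ →
      HasTy Ω Ψ (.pair V₁ V₂) (.prod τ₁ .unavail τ₂ .avail)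
  | fst {Ω Ψ : Ctx} {V : VS} {τ₁ τ₂ : VSTy} {a : Avail} :
      HasTy Ω Ψ V (.prod τ₁ .avail τ₂ a) → HasTy Ω Ψ (.fst V) τ₁
  | snd {Ω Ψ : Ctx} {V : VS} {τ₁ τ₂ : VSTy} {a : Avail} :
      HasTy Ω Ψ V (.prod τ₁ a τ₂ .avail) → HasTy Ω Ψ (.snd V) τ₂
  | sub {Ω Ψ : Ctx} {V : VS} {τ' τ : VSTy} :
      HasTy Ω Ψ V τ' → SubTy τ' τ → HasTy Ω Ψ V τ

/-- Big-step normalization of vertex structures  V ↓ V'. -/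
inductive VNorm : VS → VS → Prop
  | var (u : ℕ) : VNorm (.var u) (.var u)
  | gen (g : ℕ) : VNorm (.gen g) (.gen g)
  | pair {V₁ V₁' V₂ V₂' : VS} :
      VNorm V₁ V₁' → VNorm V₂ V₂' → VNorm (.pair V₁ V₂) (.pair V₁' V₂')
  | fstPair {V V₁ V₂ : VS} : VNorm V (.pair V₁ V₂) → VNorm (.fst V) V₁
  | fstNotPair {V V' : VS} :
      VNorm V V' → (∀ V₁ V₂, V' ≠ .pair V₁ V₂) → VNorm (.fst V) (.fst V')
  | sndPair {V V₁ V₂ : VS} : VNorm V (.pair V₁ V₂) → VNorm (.snd V) V₂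
  | sndNotPair {V V' : VS} :
      VNorm V V' → (∀ V₁ V₂, V' ≠ .pair V₁ V₂) → VNorm (.snd V) (.snd V')

/-- Vertex structure equivalence  Ψ ⊢ V ≡ V' : τ. -/
inductive VSEquiv : Ctx → VS → VS → VSTy → Prop
  | refl {Ψ : Ctx} {V : VS} {τ : VSTy} :
      HasTy [] Ψ V τ → VSEquiv Ψ V V τ
  | comm {Ψ : Ctx} {V V' : VS} {τ : VSTy} :
      VSEquiv Ψ V' V τ → VSEquiv Ψ V V' τ
  | trans {Ψ : Ctx} {V V'' V' : VS} {τ : VSTy} :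
      VSEquiv Ψ V V'' τ → VSEquiv Ψ V'' V' τ → VSEquiv Ψ V V' τ
  | pair {Ψ : Ctx} {V₁ V₁' V₂ V₂' : VS} {τ₁ τ₂ : VSTy} :
      VSEquiv Ψ V₁ V₁' τ₁ → VSEquiv Ψ V₂ V₂' τ₂ →
      VSEquiv Ψ (.pair V₁ V₂) (.pair V₁' V₂') (.prod τ₁ .avail τ₂ .avail)
  | onlyLeftPair {Ψ Ψ' : Ctx} {V₁ V₁' V₂ V₂' : VS} {τ₁ τ₂ : VSTy} :
      VSEquiv Ψ V₁ V₁' τ₁ → VSEquiv Ψ' V₂ V₂' τ₂ →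
      VSEquiv Ψ (.pair V₁ V₂) (.pair V₁' V₂') (.prod τ₁ .avail τ₂ .unavail)
  | onlyRightPair {Ψ Ψ' : Ctx} {V₁ V₁' V₂ V₂' : VS} {τ₁ τ₂ : VSTy} :
      VSEquiv Ψ' V₁ V₁' τ₁ → VSEquiv Ψ V₂ V₂' τ₂ →
      VSEquiv Ψ (.pair V₁ V₂) (.pair V₁' V₂') (.prod τ₁ .unavail τ₂ .avail)
  | fst {Ψ : Ctx} {V V' : VS} {τ₁ τ₂ : VSTy} {a : Avail} :
      VSEquiv Ψ V V' (.prod τ₁ .avail τ₂ a) → VSEquiv Ψ (.fst V) (.fst V') τ₁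
  | snd {Ψ : Ctx} {V V' : VS} {τ₁ τ₂ : VSTy} {a : Avail} :
      VSEquiv Ψ V V' (.prod τ₁ a τ₂ .avail) → VSEquiv Ψ (.snd V) (.snd V') τ₂
  | fstPair {Ψ : Ctx} {V V₁ V₂ : VS} {τ₁ τ₂ : VSTy} {a : Avail} :
      VSEquiv Ψ V (.pair V₁ V₂) (.prod τ₁ .avail τ₂ a) →
      VSEquiv Ψ (.fst V) V₁ τ₁
  | sndPair {Ψ : Ctx} {V V₁ V₂ : VS} {τ₁ τ₂ : VSTy} {a : Avail} :
      VSEquiv Ψ V (.pair V₁ V₂) (.prod τ₁ a τ₂ .avail) →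
      VSEquiv Ψ (.snd V) V₂ τ₂
  | sub {Ψ : Ctx} {V V' : VS} {τ' τ : VSTy} :
      VSEquiv Ψ V V' τ' → SubTy τ' τ → VSEquiv Ψ V V' τ

/-- VNeutral vertex structures: variables, generators, and their projections. -/
inductive VNeutral : VS → Prop
  | var (u : ℕ) : VNeutral (.var u)
  | gen (g : ℕ) : VNeutral (.gen g)
  | fst {V : VS} : VNeutral V → VNeutral (.fst V)
  | snd {V : VS} : VNeutral V → VNeutral (.snd V)

/-- VNormal vertex structures: neutral structures and pairs of normal structures. -/
inductive VNormal : VS → Prop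
  | neutral {V : VS} : VNeutral V → VNormal V
  | pair {V₁ V₂ : VS} : VNormal V₁ → VNormal V₂ → VNormal (.pair V₁ V₂)

/-- Vertex paths: a generator followed by a sequence of projections. -/
inductive IsPath : VS → Prop
  | gen (g : ℕ) : IsPath (.gen g)
  | fst {p : VS} : IsPath p → IsPath (.fst p)
  | snd {p : VS} : IsPath p → IsPath (.snd p)

/-- A context containing only generator bindings. -/
def GenOnly (Ω : Ctx) : Prop := ∀ e ∈ Ω, ∃ g τ, e = (VName.gen g, τ)

/-- Substitution of a vertex structure for a VS variable. -/
def VS.subst (u : ℕ) (W : VS) : VS → VS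
  | .var v => if v = u then W else .var v
  | .gen g => .gen g
  | .pair V₁ V₂ => .pair (VS.subst u W V₁) (VS.subst u W V₂)
  | .fst V => .fst (VS.subst u W V)
  | .snd V => .snd (VS.subst u W V)

/-! ### Auxiliary development for the regrouping lemma -/

/-- Canonical (subtyping-free) VS type splitting, with explicit mirror rules. -/
inductive CSplit : VSTy → VSTy → VSTy → Prop
  | prod (τ₁ τ₂ : VSTy) :
      CSplit (.prod τ₁ .avail τ₂ .avail) (.prod τ₁ .avail τ₂ .unavail) (.prod τ₁ .unavail τ₂ .avail)
  | prodSwap (τ₁ τ₂ : VSTy) :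
      CSplit (.prod τ₁ .avail τ₂ .avail) (.prod τ₁ .unavail τ₂ .avail) (.prod τ₁ .avail τ₂ .unavail)
  | both {τ₁ a b τ₂ c d : VSTy} :
      CSplit τ₁ a b → CSplit τ₂ c d →
      CSplit (.prod τ₁ .avail τ₂ .avail) (.prod a .avail c .avail) (.prod b .avail d .avail)
  | left {τ₁ a b : VSTy} (τ₂ : VSTy) (x : Avail) :
      CSplit τ₁ a b →
      CSplit (.prod τ₁ .avail τ₂ x) (.prod a .avail τ₂ x) (.prod b .avail τ₂ .unavail)
  | leftSwap {τ₁ a b : VSTy} (τ₂ : VSTy) (x : Avail) :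
      CSplit τ₁ a b →
      CSplit (.prod τ₁ .avail τ₂ x) (.prod a .avail τ₂ .unavail) (.prod b .avail τ₂ x)
  | right {τ₂ a b : VSTy} (τ₁ : VSTy) (x : Avail) :
      CSplit τ₂ a b →
      CSplit (.prod τ₁ x τ₂ .avail) (.prod τ₁ x a .avail) (.prod τ₁ .unavail b .avail)
  | rightSwap {τ₂ a b : VSTy} (τ₁ : VSTy) (x : Avail) :
      CSplit τ₂ a b →
      CSplit (.prod τ₁ x τ₂ .avail) (.prod τ₁ .unavail a .avail) (.prod τ₁ x b .avail)
  | corec {t : ℕ} {τ a b : VSTy} :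
      CSplit (VSTy.subst t (.corec t τ) τ) a b → CSplit (.corec t τ) a b

theorem CSplit.comm' {τ a b : VSTy} (h : CSplit τ a b) : CSplit τ b a := by
  induction h with
  | prod τ₁ τ₂ => exact .prodSwap τ₁ τ₂
  | prodSwap τ₁ τ₂ => exact .prod τ₁ τ₂
  | both _ _ ih1 ih2 => exact .both ih1 ih2
  | left τ₂ x _ ih => exact .leftSwap τ₂ x ih
  | leftSwap τ₂ x _ ih => exact .left τ₂ x ih
  | right τ₁ x _ ih => exact .rightSwap τ₁ x ih
  | rightSwap τ₁ x _ ih => exact .right τ₁ x ih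
  | corec _ ih => exact .corec ih

theorem CSplit.toV {τ a b : VSTy} (h : CSplit τ a b) : VSplit τ a b := by
  induction h with
  | prod τ₁ τ₂ => exact .prod τ₁ τ₂
  | prodSwap τ₁ τ₂ => exact .comm (.prod τ₁ τ₂)
  | both _ _ ih1 ih2 => exact .both ih1 ih2
  | left τ₂ x _ ih => exact .left τ₂ x ih
  | leftSwap τ₂ x _ ih => exact .comm (.left τ₂ x (.comm ih))
  | right τ₁ x _ ih => exact .right τ₁ x ih
  | rightSwap τ₁ x _ ih => exact .comm (.right τ₁ x (.comm ih))
  | corec _ ih => exact .corec ih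

/-- Subsume the right-hand output of a split. -/
theorem VSplit.subR {τ a b b' : VSTy} (h : VSplit τ a b) (s : SubTy b b') : VSplit τ a b' :=
  .comm (.sub (.comm h) s)

/-- `left` with the unavailable copy on the left. -/
theorem VSplit.leftS {τ₁ a b : VSTy} (τ₂ : VSTy) (x : Avail) (h : VSplit τ₁ a b) :
    VSplit (.prod τ₁ .avail τ₂ x) (.prod a .avail τ₂ .unavail) (.prod b .avail τ₂ x) :=
  .comm (.left τ₂ x (.comm h))

/-- `right` with the unavailable copy on the left. -/
theorem VSplit.rightS {τ₂ a b : VSTy} (τ₁ : VSTy) (x : Avail) (h : VSplit τ₂ a b) :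
    VSplit (.prod τ₁ x τ₂ .avail) (.prod τ₁ .unavail a .avail) (.prod τ₁ x b .avail) :=
  .comm (.right τ₁ x (.comm h))

/-- Every split factors through a canonical split followed by subtyping. -/
theorem vsplit_csplit {τ a b : VSTy} (h : VSplit τ a b) :
    ∃ a' b', CSplit τ a' b' ∧ SubTy a' a ∧ SubTy b' b := by
  induction h with
  | prod τ₁ τ₂ => exact ⟨_, _, .prod τ₁ τ₂, .refl _, .refl _⟩
  | both _ _ ih1 ih2 =>
      obtain ⟨a1, b1, c1, s1, s1'⟩ := ih1
      obtain ⟨a2, b2, c2, s2, s2'⟩ := ih2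
      exact ⟨_, _, .both c1 c2, .prodCong _ _ s1 s2, .prodCong _ _ s1' s2'⟩
  | left τ₂ x _ ih =>
      obtain ⟨a1, b1, c1, s1, s1'⟩ := ih
      exact ⟨_, _, .left τ₂ x c1, .prodCong _ _ s1 (.refl _), .prodCong _ _ s1' (.refl _)⟩
  | right τ₁ x _ ih =>
      obtain ⟨a1, b1, c1, s1, s1'⟩ := ih
      exact ⟨_, _, .right τ₁ x c1, .prodCong _ _ (.refl _) s1, .prodCong _ _ (.refl _) s1'⟩
  | corec _ ih =>
      obtain ⟨a1, b1, c1, s1, s1'⟩ := ih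
      exact ⟨_, _, .corec c1, s1, s1'⟩
  | sub _ s ih =>
      obtain ⟨a1, b1, c1, s1, s1'⟩ := ih
      exact ⟨_, _, c1, s1.trans s, s1'⟩
  | comm _ ih =>
      obtain ⟨a1, b1, c1, s1, s1'⟩ := ih
      exact ⟨_, _, c1.comm', s1', s1⟩

/-- Canonical splits pull back along subtyping. -/
theorem csplit_pullback {σ τ : VSTy} (s : SubTy σ τ) : ∀ a b, CSplit τ a b →
    ∃ a' b', CSplit σ a' b' ∧ SubTy a' a ∧ SubTy b' b := by
  induction s with
  | refl τ => exact fun a b h => ⟨a, b, h, .refl _, .refl _⟩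
  | trans _ _ ih1 ih2 =>
      intro a b h
      obtain ⟨a2, b2, c2, s2, s2'⟩ := ih2 a b h
      obtain ⟨a1, b1, c1, s1, s1'⟩ := ih1 a2 b2 c2
      exact ⟨a1, b1, c1, s1.trans s2, s1'.trans s2'⟩
  | prodLeft τ₁ a₁ τ₂ a₂ τ₃ =>
      intro a b h
      cases h with
      | right _ _ h' =>
          exact ⟨_, _, .right τ₁ a₁ h', .prodLeft _ _ _ _ _, .prodLeft _ _ _ _ _⟩
      | rightSwap _ _ h' =>
          exact ⟨_, _, .rightSwap τ₁ a₁ h', .prodLeft _ _ _ _ _, .prodLeft _ _ _ _ _⟩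
  | prodRight τ₁ a₁ τ₂ a₂ τ₃ =>
      intro a b h
      cases h with
      | left _ _ h' =>
          exact ⟨_, _, .left τ₂ a₂ h', .prodRight _ _ _ _ _, .prodRight _ _ _ _ _⟩
      | leftSwap _ _ h' =>
          exact ⟨_, _, .leftSwap τ₂ a₂ h', .prodRight _ _ _ _ _, .prodRight _ _ _ _ _⟩
  | prodCong a₁ a₂ s₁ s₂ ih1 ih2 =>
      intro a b h
      cases h with
      | prod =>
          exact ⟨_, _, .prod _ _, .prodCong _ _ s₁ s₂, .prodCong _ _ s₁ s₂⟩
      | prodSwap =>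
          exact ⟨_, _, .prodSwap _ _, .prodCong _ _ s₁ s₂, .prodCong _ _ s₁ s₂⟩
      | both h1 h2 =>
          obtain ⟨p, q, c1, u1, u1'⟩ := ih1 _ _ h1
          obtain ⟨r, t, c2, u2, u2'⟩ := ih2 _ _ h2
          exact ⟨_, _, .both c1 c2, .prodCong _ _ u1 u2, .prodCong _ _ u1' u2'⟩
      | left _ _ h1 =>
          obtain ⟨p, q, c1, u1, u1'⟩ := ih1 _ _ h1
          exact ⟨_, _, .left _ _ c1, .prodCong _ _ u1 s₂, .prodCong _ _ u1' s₂⟩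
      | leftSwap _ _ h1 =>
          obtain ⟨p, q, c1, u1, u1'⟩ := ih1 _ _ h1
          exact ⟨_, _, .leftSwap _ _ c1, .prodCong _ _ u1 s₂, .prodCong _ _ u1' s₂⟩
      | right _ _ h2 =>
          obtain ⟨p, q, c2, u2, u2'⟩ := ih2 _ _ h2
          exact ⟨_, _, .right _ _ c2, .prodCong _ _ s₁ u2, .prodCong _ _ s₁ u2'⟩
      | rightSwap _ _ h2 =>
          obtain ⟨p, q, c2, u2, u2'⟩ := ih2 _ _ h2
          exact ⟨_, _, .rightSwap _ _ c2, .prodCong _ _ s₁ u2, .prodCong _ _ s₁ u2'⟩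
  | corec1 t τ =>
      intro a b h
      exact ⟨a, b, .corec h, .refl _, .refl _⟩
  | corec2 t τ =>
      intro a b h
      cases h with
      | corec h' => exact ⟨a, b, h', .refl _, .refl _⟩

/-- Core associativity for canonical splits. -/
theorem csplit_assoc {τ A B : VSTy} (h : CSplit τ A B) :
    ∀ α β, CSplit A α β → ∃ ρ, VSplit τ α ρ ∧ VSplit ρ β B := by
  induction h with
  | prod τa τb =>
      intro α β hs
      cases hs with
      | left _ _ h' =>
          exact ⟨_, .leftS τb .avail h'.toV,
            (VSplit.prod _ τb).subR (.prodLeft _ _ _ _ τa)⟩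
      | leftSwap _ _ h' =>
          exact ⟨_, .leftS τb .avail h'.toV,
            (VSplit.prod _ τb).subR (.prodLeft _ _ _ _ τa)⟩
  | prodSwap τa τb =>
      intro α β hs
      cases hs with
      | right _ _ h' =>
          exact ⟨_, .rightS τa .avail h'.toV,
            ((VSplit.prod τa _).comm).subR (.prodRight _ _ _ _ τb)⟩
      | rightSwap _ _ h' =>
          exact ⟨_, .rightS τa .avail h'.toV,
            ((VSplit.prod τa _).comm).subR (.prodRight _ _ _ _ τb)⟩
  | both h1 h2 ih1 ih2 =>
      intro α β hs
      cases hs with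
      | prod =>
          exact ⟨_, .sub (.leftS _ .avail h1.toV) (.prodRight _ _ _ _ _),
            .sub (.rightS _ .avail h2.toV) (.prodLeft _ _ _ _ _)⟩
      | prodSwap =>
          exact ⟨_, .sub (.rightS _ .avail h2.toV) (.prodLeft _ _ _ _ _),
            .sub (.leftS _ .avail h1.toV) (.prodRight _ _ _ _ _)⟩
      | both h1' h2' =>
          obtain ⟨ρ₁, u1, u2⟩ := ih1 _ _ h1'
          obtain ⟨ρ₂, v1, v2⟩ := ih2 _ _ h2'
          exact ⟨_, .both u1 v1, .both u2 v2⟩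
      | left _ _ h1' =>
          obtain ⟨ρ₁, u1, u2⟩ := ih1 _ _ h1'
          exact ⟨_, .both u1 h2.toV,
            .sub (.leftS _ .avail u2) (.prodRight _ _ _ _ _)⟩
      | leftSwap _ _ h1' =>
          obtain ⟨ρ₁, u1, u2⟩ := ih1 _ _ h1'
          exact ⟨_, .sub (.leftS _ .avail u1) (.prodRight _ _ _ _ _),
            .both u2 h2.toV⟩
      | right _ _ h2' =>
          obtain ⟨ρ₂, v1, v2⟩ := ih2 _ _ h2'
          exact ⟨_, .both h1.toV v1,
            .sub (.rightS _ .avail v2) (.prodLeft _ _ _ _ _)⟩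
      | rightSwap _ _ h2' =>
          obtain ⟨ρ₂, v1, v2⟩ := ih2 _ _ h2'
          exact ⟨_, .sub (.rightS _ .avail v1) (.prodLeft _ _ _ _ _),
            .both h1.toV v2⟩
  | left τb x h1 ih1 =>
      intro α β hs
      cases hs with
      | left _ _ h1' =>
          obtain ⟨ρ₁, u1, u2⟩ := ih1 _ _ h1'
          exact ⟨_, .left τb x u1, .left τb .unavail u2⟩
      | leftSwap _ _ h1' =>
          obtain ⟨ρ₁, u1, u2⟩ := ih1 _ _ h1'
          exact ⟨_, .leftS τb x u1, .left τb x u2⟩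
      | prod =>
          exact ⟨_, .leftS τb .avail h1.toV,
            .sub ((VSplit.prod _ τb).comm) (.prodLeft _ _ _ _ _)⟩
      | prodSwap =>
          exact ⟨_, .sub ((VSplit.prod _ τb).comm) (.prodLeft _ _ _ _ _),
            .left τb .unavail h1.toV⟩
      | both h1' h2' =>
          obtain ⟨ρ₁, u1, u2⟩ := ih1 _ _ h1'
          exact ⟨_, .both u1 h2'.toV,
            (VSplit.left _ .avail u2).subR (.prodRight _ _ _ _ _)⟩
      | right _ _ h2' =>
          exact ⟨_, .both h1.toV h2'.toV,
            ((.sub ((VSplit.prod _ _).comm) (.prodLeft _ _ _ _ _) : VSplit _ _ _).subR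
              (.prodRight _ _ _ _ _))⟩
      | rightSwap _ _ h2' =>
          exact ⟨_, .sub (.rightS _ .avail h2'.toV) (.prodLeft _ _ _ _ _),
            (VSplit.left _ .avail h1.toV).subR (.prodRight _ _ _ _ _)⟩
  | leftSwap τb x h1 ih1 =>
      intro α β hs
      cases hs with
      | left _ _ h1' =>
          obtain ⟨ρ₁, u1, u2⟩ := ih1 _ _ h1'
          exact ⟨_, .leftS τb x u1, .leftS τb x u2⟩
      | leftSwap _ _ h1' =>
          obtain ⟨ρ₁, u1, u2⟩ := ih1 _ _ h1'
          exact ⟨_, .leftS τb x u1, .leftS τb x u2⟩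
  | right τa x h1 ih1 =>
      intro α β hs
      cases hs with
      | right _ _ h1' =>
          obtain ⟨ρ₁, u1, u2⟩ := ih1 _ _ h1'
          exact ⟨_, .right τa x u1, .right τa .unavail u2⟩
      | rightSwap _ _ h1' =>
          obtain ⟨ρ₁, u1, u2⟩ := ih1 _ _ h1'
          exact ⟨_, .rightS τa x u1, .right τa x u2⟩
      | prod =>
          exact ⟨_, .sub (VSplit.prod τa _) (.prodRight _ _ _ _ _),
            .right τa .unavail h1.toV⟩
      | prodSwap =>
          exact ⟨_, .rightS τa .avail h1.toV,
            .sub (VSplit.prod τa _) (.prodRight _ _ _ _ _)⟩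
      | both h1' h2' =>
          obtain ⟨ρ₁, u1, u2⟩ := ih1 _ _ h2'
          exact ⟨_, .both h1'.toV u1,
            (VSplit.right _ .avail u2).subR (.prodLeft _ _ _ _ _)⟩
      | left _ _ h2' =>
          exact ⟨_, .both h2'.toV h1.toV,
            ((.sub (VSplit.prod _ _) (.prodRight _ _ _ _ _) : VSplit _ _ _).subR
              (.prodLeft _ _ _ _ _))⟩
      | leftSwap _ _ h2' =>
          exact ⟨_, .sub (.leftS _ .avail h2'.toV) (.prodRight _ _ _ _ _),
            (VSplit.right _ .avail h1.toV).subR (.prodLeft _ _ _ _ _)⟩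
  | rightSwap τa x h1 ih1 =>
      intro α β hs
      cases hs with
      | right _ _ h1' =>
          obtain ⟨ρ₁, u1, u2⟩ := ih1 _ _ h1'
          exact ⟨_, .rightS τa x u1, .rightS τa x u2⟩
      | rightSwap _ _ h1' =>
          obtain ⟨ρ₁, u1, u2⟩ := ih1 _ _ h1'
          exact ⟨_, .rightS τa x u1, .rightS τa x u2⟩
  | corec h ih =>
      intro α β hs
      obtain ⟨ρ, u1, u2⟩ := ih α β hs
      exact ⟨ρ, .corec u1, u2⟩

/-- Associativity of VS type splitting. -/
theorem vsplit_assoc {τ τ₁ τ₂ σ₁ σ₂ : VSTy} (h : VSplit τ τ₁ τ₂) (h1 : VSplit τ₁ σ₁ σ₂) :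
    ∃ ρ, VSplit τ σ₁ ρ ∧ VSplit ρ σ₂ τ₂ := by
  obtain ⟨A, B, c, sA, sB⟩ := vsplit_csplit h
  obtain ⟨A', B', c', sA', sB'⟩ := vsplit_csplit h1
  obtain ⟨α, β, c'', sα, sβ⟩ := csplit_pullback sA _ _ c'
  obtain ⟨ρ, u1, u2⟩ := csplit_assoc c _ _ c''
  exact ⟨ρ, .sub u1 (sα.trans sA'), ((u2.sub (sβ.trans sB')).subR sB)⟩

theorem ctxsplit_nil : ∀ Ω : Ctx, CtxSplit Ω [] Ω
  | [] => .empty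
  | (x, τ) :: Ω => .comm (.bind x τ (.comm (ctxsplit_nil Ω)))

theorem ctxsplit_nil_inv : ∀ {Ω Δ₁ Δ₂ : Ctx}, CtxSplit Ω Δ₁ Δ₂ → Ω = [] →
    Δ₁ = [] ∧ Δ₂ = [] := by
  intro Ω Δ₁ Δ₂ h
  induction h with
  | empty => exact fun _ => ⟨rfl, rfl⟩
  | comm _ ih => intro e; exact ⟨(ih e).2, (ih e).1⟩
  | bind x τ _ _ => intro e; exact absurd e (by simp)
  | typeSplit x _ _ _ => intro e; exact absurd e (by simp)

theorem ctxsplit_cons_inv : ∀ {Ω Δ₁ Δ₂ : Ctx}, CtxSplit Ω Δ₁ Δ₂ →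
    ∀ x τ (Γ : Ctx), Ω = (x, τ) :: Γ →
    (∃ Δ₁', Δ₁ = (x, τ) :: Δ₁' ∧ CtxSplit Γ Δ₁' Δ₂) ∨
    (∃ Δ₂', Δ₂ = (x, τ) :: Δ₂' ∧ CtxSplit Γ Δ₁ Δ₂') ∨
    (∃ τ₁ τ₂ Δ₁' Δ₂', Δ₁ = (x, τ₁) :: Δ₁' ∧ Δ₂ = (x, τ₂) :: Δ₂' ∧
      VSplit τ τ₁ τ₂ ∧ CtxSplit Γ Δ₁' Δ₂') := by
  intro Ω Δ₁ Δ₂ h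
  induction h with
  | empty => intro x τ Γ e; exact absurd e (by simp)
  | comm _ ih =>
      intro x τ Γ e
      rcases ih x τ Γ e with ⟨Δ, e1, h2⟩ | ⟨Δ, e1, h2⟩ | ⟨τ₁, τ₂, Δ₁', Δ₂', e1, e2, v, h2⟩
      · exact .inr (.inl ⟨Δ, e1, .comm h2⟩)
      · exact .inl ⟨Δ, e1, .comm h2⟩
      · exact .inr (.inr ⟨τ₂, τ₁, Δ₂', Δ₁', e2, e1, .comm v, .comm h2⟩)
  | bind y σ h _ =>
      intro x τ Γ e
      obtain ⟨e1, e2⟩ := List.cons.inj e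
      obtain ⟨ex, eτ⟩ := Prod.mk.injEq _ _ _ _ ▸ e1
      subst e2
      cases ex; cases eτ
      exact .inl ⟨_, rfl, h⟩
  | typeSplit y h v =>
      intro x τ Γ e
      obtain ⟨e1, e2⟩ := List.cons.inj e
      obtain ⟨ex, eτ⟩ := Prod.mk.injEq _ _ _ _ ▸ e1
      subst e2
      cases ex; cases eτ
      exact .inr (.inr ⟨_, _, _, _, rfl, rfl, v, h⟩)

/-- Two-sided associativity of context splitting. -/
theorem ctxsplit_assoc2 {Ω Ω₁ Ω₂ : Ctx} (h : CtxSplit Ω Ω₁ Ω₂) :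
    (∀ Δ₁ Δ₂, CtxSplit Ω₁ Δ₁ Δ₂ → ∃ Δ, CtxSplit Ω Δ₁ Δ ∧ CtxSplit Δ Δ₂ Ω₂) ∧
    (∀ Δ₁ Δ₂, CtxSplit Ω₂ Δ₁ Δ₂ → ∃ Δ, CtxSplit Ω Δ₁ Δ ∧ CtxSplit Δ Δ₂ Ω₁) := by
  induction h with
  | empty =>
      constructor <;>
      · intro Δ₁ Δ₂ h2
        obtain ⟨e1, e2⟩ := ctxsplit_nil_inv h2 rfl
        subst e1; subst e2
        exact ⟨[], .empty, .empty⟩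
  | comm _ ih => exact ⟨ih.2, ih.1⟩
  | bind x τ h ih =>
      constructor
      · intro Δ₁ Δ₂ h2
        rcases ctxsplit_cons_inv h2 x τ _ rfl with
          ⟨Δ₁', e1, h3⟩ | ⟨Δ₂', e2, h3⟩ | ⟨σ₁, σ₂, Δ₁', Δ₂', e1, e2, v, h3⟩
        · subst e1
          obtain ⟨Δ, u1, u2⟩ := ih.1 _ _ h3
          exact ⟨Δ, .bind x τ u1, u2⟩
        · subst e2
          obtain ⟨Δ, u1, u2⟩ := ih.1 _ _ h3
          exact ⟨(x, τ) :: Δ, .comm (.bind x τ (.comm u1)), .bind x τ u2⟩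
        · subst e1; subst e2
          obtain ⟨Δ, u1, u2⟩ := ih.1 _ _ h3
          exact ⟨(x, σ₂) :: Δ, .typeSplit x u1 v, .bind x σ₂ u2⟩
      · intro Δ₁ Δ₂ h2
        obtain ⟨Δ, u1, u2⟩ := ih.2 _ _ h2
        exact ⟨(x, τ) :: Δ, .comm (.bind x τ (.comm u1)),
          .comm (.bind x τ (.comm u2))⟩
  | typeSplit x h v ih =>
      constructor
      · intro Δ₁ Δ₂ h2
        rcases ctxsplit_cons_inv h2 x _ _ rfl with
          ⟨Δ₁', e1, h3⟩ | ⟨Δ₂', e2, h3⟩ | ⟨σ₁, σ₂, Δ₁', Δ₂', e1, e2, v', h3⟩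
        · subst e1
          obtain ⟨Δ, u1, u2⟩ := ih.1 _ _ h3
          exact ⟨(x, _) :: Δ, .typeSplit x u1 v, .comm (.bind x _ (.comm u2))⟩
        · subst e2
          obtain ⟨Δ, u1, u2⟩ := ih.1 _ _ h3
          exact ⟨(x, _) :: Δ, .comm (.bind x _ (.comm u1)), .typeSplit x u2 v⟩
        · subst e1; subst e2
          obtain ⟨ρ, w1, w2⟩ := vsplit_assoc v v'
          obtain ⟨Δ, u1, u2⟩ := ih.1 _ _ h3
          exact ⟨(x, ρ) :: Δ, .typeSplit x u1 w1, .typeSplit x u2 w2⟩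
      · intro Δ₁ Δ₂ h2
        rcases ctxsplit_cons_inv h2 x _ _ rfl with
          ⟨Δ₁', e1, h3⟩ | ⟨Δ₂', e2, h3⟩ | ⟨σ₁, σ₂, Δ₁', Δ₂', e1, e2, v', h3⟩
        · subst e1
          obtain ⟨Δ, u1, u2⟩ := ih.2 _ _ h3
          exact ⟨(x, _) :: Δ, .typeSplit x u1 (.comm v), .comm (.bind x _ (.comm u2))⟩
        · subst e2
          obtain ⟨Δ, u1, u2⟩ := ih.2 _ _ h3
          exact ⟨(x, _) :: Δ, .comm (.bind x _ (.comm u1)), .typeSplit x u2 (.comm v)⟩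
        · subst e1; subst e2
          obtain ⟨ρ, w1, w2⟩ := vsplit_assoc (VSplit.comm v) v'
          obtain ⟨Δ, u1, u2⟩ := ih.2 _ _ h3
          exact ⟨(x, ρ) :: Δ, .typeSplit x u1 w1, .typeSplit x u2 w2⟩

/-- regrouping of a three-way context split. -/
theorem ctxSplit_regroup {Ω Ω₁ Ω₂ Ω₁' Ω₁'' Ω₂' Ω₂'' : Ctx}
    (h : CtxSplit Ω Ω₁ Ω₂) (h₁ : CtxSplit Ω₁ Ω₁' Ω₁'') (h₂ : CtxSplit Ω₂ Ω₂' Ω₂'') :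
    ∃ Ω' Ω'', CtxSplit Ω Ω' Ω'' ∧ CtxSplit Ω' Ω₁' Ω₂' ∧ CtxSplit Ω'' Ω₁'' Ω₂'' := by
  obtain ⟨E, e1, e2⟩ := (ctxsplit_assoc2 h).1 _ _ h₁
  obtain ⟨F, f1, f2⟩ := (ctxsplit_assoc2 (CtxSplit.comm e2)).1 _ _ h₂
  obtain ⟨H, g1, g2⟩ := (ctxsplit_assoc2 (CtxSplit.comm e1)).1 _ _ (CtxSplit.comm f1)
  exact ⟨H, F, .comm g1, .comm g2, .comm f2⟩
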